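/- arXiv:1412.5907 — 4 statements merged into one kernel-verified Lean document; each statement's English description precedes it below -/
import Mathlib

section
/- Let (B,Φ_B,H,ℓ) be an augmented rack bialgebra over K whose underlying coalgebra B is cocommutative. On the tensor-product coalgebra B⊗H define Φ(b⊗h) := Φ_B(b)h, the products (b⊗h)⊢(b′⊗h′) := Σ ((Φ_B(b)h)⁽¹⁾.b′)⊗((Φ_B(b)h)⁽²⁾h′) and (b⊗h)⊣(b′⊗h′) := b⊗(h·Φ_B(b′)h′), and S(b⊗h) := 1_B⊗S_H(Φ_B(b)h). Then (B⊗H, Δ_{B⊗H}, ε_B⊗ε_H, 1_B⊗1_H, ⊢, ⊣, S) is a cocommutative Hopf dialgebra. Moreover, identifying x ∈ Prim(B) with x⊗1_H and ξ ∈ Prim(H) with 1_B⊗ξ, the Leibniz bracket [u,v] := u⊢v − v⊣u on Prim(B⊗H) = Prim(B)⊕Prim(H) is given by [x+ξ, y+η] = ([x,y] + ξ.y) + ([Φ_B(x),η] + [ξ,η]), where [x,y] = Φ_B(x).y and the brackets in H are commutators. -/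
open TensorProduct

namespace RackPaper

variable (K : Type*) [CommRing K]
variable (B : Type*) [AddCommGroup B] [Module K B]

/-- Comultiplication of the tensor-product coalgebra `B ⊗ B`. -/
noncomputable def comul2 (comul : B →ₗ[K] B ⊗[K] B) :
    B ⊗[K] B →ₗ[K] (B ⊗[K] B) ⊗[K] (B ⊗[K] B) :=
  (tensorTensorTensorComm K B B B B).toLinearMap ∘ₗ TensorProduct.map comul comul

/-- Counit of the tensor-product coalgebra `B ⊗ B`. -/
noncomputable def counit2 (counit : B →ₗ[K] K) : B ⊗[K] B →ₗ[K] K :=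
  (LinearMap.mul' K K) ∘ₗ TensorProduct.map counit counit

/-- `(B, comul, counit, one)` is a coassociative counital coaugmented coalgebra. -/
structure IsC3Coalgebra (comul : B →ₗ[K] B ⊗[K] B) (counit : B →ₗ[K] K) (one : B) : Prop where
  coassoc : (TensorProduct.assoc K B B B).toLinearMap ∘ₗ
      (TensorProduct.map comul LinearMap.id) ∘ₗ comul
      = (TensorProduct.map LinearMap.id comul) ∘ₗ comul
  counit_comul : (TensorProduct.lid K B).toLinearMap ∘ₗ
      (TensorProduct.map counit LinearMap.id) ∘ₗ comul = LinearMap.id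
  comul_counit : (TensorProduct.rid K B).toLinearMap ∘ₗ
      (TensorProduct.map LinearMap.id counit) ∘ₗ comul = LinearMap.id
  comul_one : comul one = one ⊗ₜ[K] one
  counit_one : counit one = 1

/-- A rack bialgebra structure on the C³-coalgebra `(B, comul, counit, one)`. -/
structure IsRackBialgebra (comul : B →ₗ[K] B ⊗[K] B) (counit : B →ₗ[K] K) (one : B)
    (mul : B ⊗[K] B →ₗ[K] B) : Prop where
  isC3 : IsC3Coalgebra K B comul counit one
  comul_mul : comul ∘ₗ mul = (TensorProduct.map mul mul) ∘ₗ comul2 K B comul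
  counit_mul : counit ∘ₗ mul = counit2 K B counit
  one_mul : ∀ a : B, mul (one ⊗ₜ[K] a) = a
  mul_one : ∀ a : B, mul (a ⊗ₜ[K] one) = counit a • one
  self_distrib : mul ∘ₗ TensorProduct.map LinearMap.id mul
      = mul ∘ₗ TensorProduct.map mul mul ∘ₗ
          (tensorTensorTensorComm K B B B B).toLinearMap ∘ₗ
          TensorProduct.map comul LinearMap.id

/-- A cocommutative Hopf dialgebra `(A, Δ, ε, 1, ⊢, ⊣, S)`: a cocommutative C³-coalgebra
such that `(A, 1, ⊢, ⊣)` is a bar-unital balanced dialgebra, `⊢` and `⊣` are morphisms of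
C³-coalgebras, and `S` is a morphism of C³-coalgebras which is a right antipode for `⊢`
and a left antipode for `⊣`. -/
structure IsHopfDialgebra (comul : B →ₗ[K] B ⊗[K] B) (counit : B →ₗ[K] K) (one : B)
    (vd dv : B ⊗[K] B →ₗ[K] B) (S : B →ₗ[K] B) : Prop where
  isC3 : IsC3Coalgebra K B comul counit one
  cocomm : ∀ x : B, (TensorProduct.comm K B B) (comul x) = comul x
  comul_vd : comul ∘ₗ vd = (TensorProduct.map vd vd) ∘ₗ comul2 K B comul
  counit_vd : counit ∘ₗ vd = counit2 K B counit
  comul_dv : comul ∘ₗ dv = (TensorProduct.map dv dv) ∘ₗ comul2 K B comul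
  counit_dv : counit ∘ₗ dv = counit2 K B counit
  vd_assoc : ∀ a b c : B, vd (vd (a ⊗ₜ[K] b) ⊗ₜ[K] c) = vd (a ⊗ₜ[K] vd (b ⊗ₜ[K] c))
  dv_assoc : ∀ a b c : B, dv (dv (a ⊗ₜ[K] b) ⊗ₜ[K] c) = dv (a ⊗ₜ[K] dv (b ⊗ₜ[K] c))
  di_ax1 : ∀ a b c : B, vd (vd (a ⊗ₜ[K] b) ⊗ₜ[K] c) = vd (dv (a ⊗ₜ[K] b) ⊗ₜ[K] c)
  di_ax2 : ∀ a b c : B, dv (a ⊗ₜ[K] dv (b ⊗ₜ[K] c)) = dv (a ⊗ₜ[K] vd (b ⊗ₜ[K] c))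
  di_ax3 : ∀ a b c : B, dv (vd (a ⊗ₜ[K] b) ⊗ₜ[K] c) = vd (a ⊗ₜ[K] dv (b ⊗ₜ[K] c))
  one_vd : ∀ a : B, vd (one ⊗ₜ[K] a) = a
  dv_one : ∀ a : B, dv (a ⊗ₜ[K] one) = a
  balanced : ∀ a : B, vd (a ⊗ₜ[K] one) = dv (one ⊗ₜ[K] a)
  right_antipode_vd : ∀ a : B,
    vd ((TensorProduct.map LinearMap.id S) (comul a)) = counit a • one
  left_antipode_dv : ∀ a : B,
    dv ((TensorProduct.map S LinearMap.id) (comul a)) = counit a • one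

/-- The rack multiplication `a ▹ b := Σ (a⁽¹⁾ ⊢ b) ⊣ S(a⁽²⁾)` of a Hopf dialgebra. -/
noncomputable def dialgebraRack (comul : B →ₗ[K] B ⊗[K] B)
    (vd dv : B ⊗[K] B →ₗ[K] B) (S : B →ₗ[K] B) : B ⊗[K] B →ₗ[K] B :=
  dv ∘ₗ TensorProduct.map vd S ∘ₗ (TensorProduct.assoc K B B B).symm.toLinearMap ∘ₗ
    TensorProduct.map LinearMap.id (TensorProduct.comm K B B).toLinearMap ∘ₗ
    (TensorProduct.assoc K B B B).toLinearMap ∘ₗ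
    TensorProduct.map comul LinearMap.id

/-- An element `x` is primitive: `Δ(x) = x ⊗ 1 + 1 ⊗ x`. -/
def IsPrimitive (comul : B →ₗ[K] B ⊗[K] B) (one : B) (x : B) : Prop :=
  comul x = x ⊗ₜ[K] one + one ⊗ₜ[K] x

/-- The adjoint representation `h ⊗ h' ↦ ad_h(h') = Σ h⁽¹⁾ h' S(h⁽²⁾)` of a Hopf algebra. -/
noncomputable def adjointMap (H : Type*) [Ring H] [HopfAlgebra K H] :
    H ⊗[K] H →ₗ[K] H :=
  (LinearMap.mul' K H) ∘ₗ
  (TensorProduct.map LinearMap.id (LinearMap.mul' K H)) ∘ₗ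
  (TensorProduct.map LinearMap.id
      (TensorProduct.map LinearMap.id (HopfAlgebra.antipode (R := K)))) ∘ₗ
  (TensorProduct.map LinearMap.id (TensorProduct.comm K H H).toLinearMap) ∘ₗ
  (TensorProduct.assoc K H H H).toLinearMap ∘ₗ
  (TensorProduct.map (Coalgebra.comul) LinearMap.id)

section TensorDialgebra

variable (H : Type*) [Ring H] [HopfAlgebra K H]

/-- The augmentation map `Φ(b ⊗ h) := Φ_B(b) h` on `B ⊗ H`. -/
noncomputable def PhiA (ΦB : B →ₗ[K] H) : B ⊗[K] H →ₗ[K] H :=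
  LinearMap.mul' K H ∘ₗ TensorProduct.map ΦB LinearMap.id

/-- The comultiplication of the tensor-product coalgebra `B ⊗ H`. -/
noncomputable def comulA (comulB : B →ₗ[K] B ⊗[K] B) :
    B ⊗[K] H →ₗ[K] (B ⊗[K] H) ⊗[K] (B ⊗[K] H) :=
  (tensorTensorTensorComm K B B H H).toLinearMap ∘ₗ
    TensorProduct.map comulB (Coalgebra.comul)

/-- The counit of the tensor-product coalgebra `B ⊗ H`. -/
noncomputable def counitA (counitB : B →ₗ[K] K) : B ⊗[K] H →ₗ[K] K :=
  LinearMap.mul' K K ∘ₗ TensorProduct.map counitB (Coalgebra.counit)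

/-- The product `(b ⊗ h) ⊢ (b' ⊗ h') := Σ ((Φ_B(b)h)⁽¹⁾.b') ⊗ ((Φ_B(b)h)⁽²⁾ h')`. -/
noncomputable def vdA (ΦB : B →ₗ[K] H) (ℓ : H ⊗[K] B →ₗ[K] B) :
    (B ⊗[K] H) ⊗[K] (B ⊗[K] H) →ₗ[K] B ⊗[K] H :=
  TensorProduct.map ℓ (LinearMap.mul' K H) ∘ₗ
    (tensorTensorTensorComm K H H B H).toLinearMap ∘ₗ
    TensorProduct.map (Coalgebra.comul) LinearMap.id ∘ₗ
    TensorProduct.map (PhiA K B H ΦB) LinearMap.id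

/-- The product `(b ⊗ h) ⊣ (b' ⊗ h') := b ⊗ (h · Φ_B(b') h')`. -/
noncomputable def dvA (ΦB : B →ₗ[K] H) :
    (B ⊗[K] H) ⊗[K] (B ⊗[K] H) →ₗ[K] B ⊗[K] H :=
  TensorProduct.map LinearMap.id (LinearMap.mul' K H) ∘ₗ
    (TensorProduct.assoc K B H H).toLinearMap ∘ₗ
    TensorProduct.map LinearMap.id (PhiA K B H ΦB)

/-- The antipode `S(b ⊗ h) := 1_B ⊗ S_H(Φ_B(b) h)`. -/
noncomputable def SA (ΦB : B →ₗ[K] H) (oneB : B) : B ⊗[K] H →ₗ[K] B ⊗[K] H :=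
  (TensorProduct.mk K B H oneB) ∘ₗ HopfAlgebra.antipode (R := K) ∘ₗ PhiA K B H ΦB

end TensorDialgebra

/-!
`B ⊗ H` carries the tensor-product coalgebra structure, `Φ(b ⊗ h) = Φ_B(b) h` is a coalgebra
map, and since `H` is cocommutative (so that `Δ_H` is a coalgebra map) the diagonal action
`g · (b ⊗ h) = Σ g⁽¹⁾.b ⊗ g⁽²⁾h` is a coalgebra map `H ⊗ (B ⊗ H) → B ⊗ H`. Hence
`X ⊢ Y = Φ(X) · Y` and `X ⊣ Y = X Φ(Y)` are composites of coalgebra maps.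

The invariance `Φ_B(h.b) = ad_h(Φ_B(b))` and the antipode identity `Σ ad_{g⁽¹⁾}(k) g⁽²⁾ = g k`
give `Φ(g · Y) = g Φ(Y)`, so `Φ` is multiplicative for both products; together with
associativity of the action this yields the dialgebra axioms. Both antipode axioms are pushed
through `Φ` to those of `S_H`. For primitive `x + ξ`, the element `Φ(x ⊗ 1 + 1 ⊗ ξ) = Φ_B(x) + ξ`
is primitive in `H`, and the bracket formula is a direct expansion.
-/

section Coalgebra

open Coalgebra

variable {K : Type*} [CommRing K] {C : Type*} [AddCommGroup C] [Module K C]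

abbrev IsC3Coalgebra.toCoalgebra {comul : C →ₗ[K] C ⊗[K] C} {counit : C →ₗ[K] K} {one : C}
    (h : IsC3Coalgebra K C comul counit one) : Coalgebra K C where
  comul := comul
  counit := counit
  coassoc := h.coassoc
  rTensor_counit_comp_comul := by
    refine LinearMap.ext fun c => (TensorProduct.lid K C).injective ?_
    simpa [LinearMap.rTensor] using LinearMap.congr_fun h.counit_comul c
  lTensor_counit_comp_comul := by
    refine LinearMap.ext fun c => (TensorProduct.rid K C).injective ?_
    simpa [LinearMap.lTensor] using LinearMap.congr_fun h.comul_counit c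

lemma IsPrimitive.add {comul : C →ₗ[K] C ⊗[K] C} {one x y : C} (hx : IsPrimitive K C comul one x)
    (hy : IsPrimitive K C comul one y) : IsPrimitive K C comul one (x + y) := by
  rw [IsPrimitive, map_add, show comul x = _ from hx, show comul y = _ from hy,
    TensorProduct.add_tmul, TensorProduct.tmul_add]
  abel

lemma IsPrimitive.map {D : Type*} [AddCommGroup D] [Module K D] {comulC : C →ₗ[K] C ⊗[K] C}
    {comulD : D →ₗ[K] D ⊗[K] D} (f : C →ₗ[K] D)
    (hf : comulD ∘ₗ f = TensorProduct.map f f ∘ₗ comulC) {one x : C}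
    (hx : IsPrimitive K C comulC one x) : IsPrimitive K D comulD (f one) (f x) := by
  rw [IsPrimitive, ← LinearMap.comp_apply, hf, LinearMap.comp_apply, show comulC x = _ from hx]
  simp

variable [Coalgebra K C]

lemma IsC3Coalgebra.of_coalgebra {one : C} (comul_one : comul one = one ⊗ₜ[K] one)
    (counit_one : counit (R := K) one = 1) : IsC3Coalgebra K C comul counit one where
  coassoc := Coalgebra.coassoc
  counit_comul := by
    ext c
    change TensorProduct.lid K C (counit.rTensor C (comul c)) = c
    simp
  comul_counit := by
    ext c
    change TensorProduct.rid K C (counit.lTensor C (comul c)) = c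
    simp
  comul_one := comul_one
  counit_one := counit_one

lemma IsPrimitive.counit_eq_zero {one : C} (counit_one : counit (R := K) one = 1) {x : C}
    (hx : IsPrimitive K C comul one x) : counit (R := K) x = 0 := by
  have h := congrArg (TensorProduct.lid K C) (rTensor_counit_comul (R := K) x)
  rw [show comul x = _ from hx] at h
  simp only [map_add, LinearMap.rTensor_tmul, TensorProduct.lid_tmul, counit_one, one_smul,
    add_eq_right] at h
  simpa [counit_one] using congrArg (counit (R := K) (A := C)) h

variable {D : Type*} [AddCommGroup D] [Module K D] [Coalgebra K D]

lemma tensorTensorTensorComm_comp_map_comul :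
    (TensorProduct.tensorTensorTensorComm K C C D D).toLinearMap ∘ₗ TensorProduct.map comul comul
      = comul (R := K) (A := C ⊗[K] D) := by
  ext x y
  simp [TensorProduct.AlgebraTensorModule.tensorTensorTensorComm_eq]

lemma mul'_comp_map_counit :
    LinearMap.mul' K K ∘ₗ TensorProduct.map counit counit = counit (R := K) (A := C ⊗[K] D) := by
  ext x y
  simp [mul_comm]

lemma comul_comp_eq_map_comp_comul2 (f : C ⊗[K] C →ₗc[K] C) :
    comul ∘ₗ (f : C ⊗[K] C →ₗ[K] C) = TensorProduct.map (f : C ⊗[K] C →ₗ[K] C) f ∘ₗ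
      comul2 K C comul := by
  rw [comul2, tensorTensorTensorComm_comp_map_comul]
  exact f.map_comp_comul.symm

lemma counit_comp_eq_counit2 (f : C ⊗[K] C →ₗc[K] C) :
    counit ∘ₗ (f : C ⊗[K] C →ₗ[K] C) = counit2 K C counit := by
  rw [counit2, mul'_comp_map_counit]
  exact f.counit_comp

end Coalgebra

section TensorTensorTensorComm

open Coalgebra

variable {K : Type*} [CommRing K] {M N P Q : Type*}
  [AddCommGroup M] [Module K M] [Coalgebra K M] [AddCommGroup N] [Module K N] [Coalgebra K N]
  [AddCommGroup P] [Module K P] [Coalgebra K P] [AddCommGroup Q] [Module K Q] [Coalgebra K Q]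

noncomputable def tensorTensorTensorCommCoalgHom :
    (M ⊗[K] N) ⊗[K] (P ⊗[K] Q) →ₗc[K] (M ⊗[K] P) ⊗[K] (N ⊗[K] Q) where
  toLinearMap := (TensorProduct.tensorTensorTensorComm K M N P Q).toLinearMap
  counit_comp := by
    ext
    simp only [LinearMap.comp_apply, LinearEquiv.coe_coe,
      TensorProduct.AlgebraTensorModule.curry_apply, TensorProduct.curry_apply,
      TensorProduct.tensorTensorTensorComm_tmul, TensorProduct.counit_tmul, smul_eq_mul,
      LinearMap.restrictScalars_self]
    ring
  map_comp_comul := by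
    ext m n p q
    simp [← (ℛ K m).eq, ← (ℛ K n).eq, ← (ℛ K p).eq, ← (ℛ K q).eq, TensorProduct.sum_tmul,
      TensorProduct.tmul_sum, TensorProduct.AlgebraTensorModule.tensorTensorTensorComm_eq]
    exact Finset.sum_congr rfl fun _ _ => Finset.sum_comm

end TensorTensorTensorComm

section Adjoint

open Coalgebra

variable {K : Type*} [CommRing K] {H : Type*} [Ring H] [HopfAlgebra K H]

lemma adjointMap_tmul {g : H} {ι : Type*} (r : Repr K g ι) (k : H) :
    adjointMap K H (g ⊗ₜ[K] k) =
      ∑ i ∈ r.index, r.left i * k * HopfAlgebra.antipode K (r.right i) := by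
  simp [adjointMap, ← r.eq, TensorProduct.sum_tmul, mul_assoc]

lemma sum_mul_algebraMap_counit {g : H} {ι : Type*} (r : Repr K g ι) :
    ∑ i ∈ r.index, r.left i * algebraMap K H (counit (r.right i)) = g := by
  have h := congrArg (LinearMap.mul' K H ∘ₗ (Algebra.linearMap K H).lTensor H)
    (sum_tmul_counit_eq r)
  simpa only [map_sum, LinearMap.comp_apply, LinearMap.lTensor_tmul, Algebra.linearMap_apply,
    LinearMap.mul'_apply, map_one, mul_one] using h

lemma sum_adjointMap_mul {g : H} {ι : Type*} (r : Repr K g ι) (k : H) :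
    ∑ i ∈ r.index, adjointMap K H (r.left i ⊗ₜ[K] k) * r.right i = g * k := by
  let T : H ⊗[K] (H ⊗[K] H) →ₗ[K] H :=
    LinearMap.mul' K H ∘ₗ TensorProduct.map (LinearMap.mulRight K k)
      (LinearMap.mul' K H ∘ₗ (HopfAlgebra.antipode K).rTensor H)
  have coassoc := congrArg T
    (sum_tmul_tmul_eq r (fun i => ℛ K (r.left i)) (fun i => ℛ K (r.right i)))
  simp only [map_sum, T, LinearMap.comp_apply, TensorProduct.map_tmul, LinearMap.rTensor_tmul,
    LinearMap.mul'_apply, LinearMap.mulRight_apply] at coassoc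
  calc _ = ∑ i ∈ r.index, ∑ j ∈ (ℛ K (r.left i)).index, (ℛ K (r.left i)).left j * k *
          (HopfAlgebra.antipode K ((ℛ K (r.left i)).right j) * r.right i) := by
        simp only [adjointMap_tmul (ℛ K _), Finset.sum_mul, mul_assoc]
    _ = ∑ i ∈ r.index, r.left i * k * algebraMap K H (counit (r.right i)) := by
        simp only [coassoc, ← Finset.mul_sum, HopfAlgebra.sum_antipode_mul_eq_algebraMap_counit]
    _ = (∑ i ∈ r.index, r.left i * algebraMap K H (counit (r.right i))) * k := by
        rw [Finset.sum_mul]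
        exact Finset.sum_congr rfl fun i _ => by rw [mul_assoc, mul_assoc, Algebra.commutes]
    _ = g * k := by rw [sum_mul_algebraMap_counit]

end Adjoint

section DiagonalAction

open Coalgebra

variable {K : Type*} [CommRing K] {B : Type*} [AddCommGroup B] [Module K B]
  {H : Type*} [Ring H] [HopfAlgebra K H]

noncomputable def diagonalAction (ℓ : H ⊗[K] B →ₗ[K] B) : H ⊗[K] (B ⊗[K] H) →ₗ[K] B ⊗[K] H :=
  TensorProduct.map ℓ (LinearMap.mul' K H) ∘ₗ
    (TensorProduct.tensorTensorTensorComm K H H B H).toLinearMap ∘ₗ LinearMap.rTensor _ comul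

lemma diagonalAction_tmul_tmul (ℓ : H ⊗[K] B →ₗ[K] B) {g : H} {ι : Type*} (r : Repr K g ι)
    (b : B) (h : H) :
    diagonalAction ℓ (g ⊗ₜ[K] (b ⊗ₜ[K] h)) =
      ∑ i ∈ r.index, ℓ (r.left i ⊗ₜ[K] b) ⊗ₜ[K] (r.right i * h) := by
  simp [diagonalAction, ← r.eq, TensorProduct.sum_tmul]

lemma diagonalAction_one (ℓ : H ⊗[K] B →ₗ[K] B) (hℓ_one : ∀ b : B, ℓ ((1 : H) ⊗ₜ[K] b) = b)
    (Y : B ⊗[K] H) : diagonalAction ℓ ((1 : H) ⊗ₜ[K] Y) = Y := by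
  induction Y using TensorProduct.induction_on with
  | zero => simp
  | add Y Y' hY hY' => simp only [TensorProduct.tmul_add, map_add, hY, hY']
  | tmul b h => simp [diagonalAction, Algebra.TensorProduct.one_def, hℓ_one]

lemma diagonalAction_mul (ℓ : H ⊗[K] B →ₗ[K] B)
    (hℓ_mul : ∀ (h h' : H) (b : B), ℓ ((h * h') ⊗ₜ[K] b) = ℓ (h ⊗ₜ[K] ℓ (h' ⊗ₜ[K] b)))
    (g g' : H) (Y : B ⊗[K] H) :
    diagonalAction ℓ ((g * g') ⊗ₜ[K] Y) =
      diagonalAction ℓ (g ⊗ₜ[K] diagonalAction ℓ (g' ⊗ₜ[K] Y)) := by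
  induction Y using TensorProduct.induction_on with
  | zero => simp
  | add Y Y' hY hY' => simp only [TensorProduct.tmul_add, map_add, hY, hY']
  | tmul b h =>
    simp [diagonalAction, Bialgebra.comul_mul, ← (ℛ K g).eq, ← (ℛ K g').eq, Finset.sum_mul_sum,
      TensorProduct.sum_tmul, TensorProduct.tmul_sum, hℓ_mul, mul_assoc]
    exact Finset.sum_comm

lemma diagonalAction_tmul_one_tmul (ℓ : H ⊗[K] B →ₗ[K] B) {oneB : B}
    (hℓ_oneB : ∀ h : H, ℓ (h ⊗ₜ[K] oneB) = counit (R := K) h • oneB) (g h : H) :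
    diagonalAction ℓ (g ⊗ₜ[K] (oneB ⊗ₜ[K] h)) = oneB ⊗ₜ[K] (g * h) := by
  simp only [diagonalAction_tmul_tmul ℓ (ℛ K g), hℓ_oneB, TensorProduct.smul_tmul,
    ← smul_mul_assoc, ← TensorProduct.tmul_sum, ← Finset.sum_mul, sum_counit_smul]

lemma diagonalAction_tmul_tmul_of_isPrimitive (ℓ : H ⊗[K] B →ₗ[K] B)
    (hℓ_one : ∀ b : B, ℓ ((1 : H) ⊗ₜ[K] b) = b) {p : H} (hp : IsPrimitive K H comul 1 p)
    (b : B) (h : H) :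
    diagonalAction ℓ (p ⊗ₜ[K] (b ⊗ₜ[K] h)) = ℓ (p ⊗ₜ[K] b) ⊗ₜ[K] h + b ⊗ₜ[K] (p * h) := by
  simp [diagonalAction, show comul p = _ from hp, TensorProduct.add_tmul, hℓ_one]

lemma lTensor_mulRight_diagonalAction (ℓ : H ⊗[K] B →ₗ[K] B) (k g : H) (Y : B ⊗[K] H) :
    (LinearMap.mulRight K k).lTensor B (diagonalAction ℓ (g ⊗ₜ[K] Y)) =
      diagonalAction ℓ (g ⊗ₜ[K] (LinearMap.mulRight K k).lTensor B Y) := by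
  induction Y using TensorProduct.induction_on with
  | zero => simp
  | add Y Y' hY hY' => simp only [TensorProduct.tmul_add, map_add, hY, hY']
  | tmul b h => simp [diagonalAction_tmul_tmul ℓ (ℛ K g), mul_assoc]

lemma PhiA_tmul (Φ : B →ₗ[K] H) (b : B) (h : H) : PhiA K B H Φ (b ⊗ₜ[K] h) = Φ b * h := rfl

lemma PhiA_diagonalAction (Φ : B →ₗ[K] H) (ℓ : H ⊗[K] B →ₗ[K] B)
    (hΦ_equiv : Φ ∘ₗ ℓ = adjointMap K H ∘ₗ TensorProduct.map LinearMap.id Φ) (g : H)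
    (Y : B ⊗[K] H) : PhiA K B H Φ (diagonalAction ℓ (g ⊗ₜ[K] Y)) = g * PhiA K B H Φ Y := by
  induction Y using TensorProduct.induction_on with
  | zero => simp
  | add Y Y' hY hY' => simp only [TensorProduct.tmul_add, map_add, hY, hY', mul_add]
  | tmul b h =>
    have hΦℓ (x : H) : Φ (ℓ (x ⊗ₜ[K] b)) = adjointMap K H (x ⊗ₜ[K] Φ b) :=
      LinearMap.congr_fun hΦ_equiv (x ⊗ₜ[K] b)
    simp only [diagonalAction_tmul_tmul ℓ (ℛ K g), map_sum, PhiA_tmul, hΦℓ, ← mul_assoc,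
      ← Finset.sum_mul, sum_adjointMap_mul]

end DiagonalAction

section CoalgHoms

open Coalgebra

variable {K : Type*} [CommRing K] {B : Type*} [AddCommGroup B] [Module K B] [Coalgebra K B]
  {H : Type*} [Ring H] [HopfAlgebra K H]

lemma comulA_eq_comul : comulA K B H comul = comul (R := K) (A := B ⊗[K] H) :=
  tensorTensorTensorComm_comp_map_comul

lemma counitA_eq_counit : counitA K B H counit = counit (R := K) (A := B ⊗[K] H) :=
  mul'_comp_map_counit

noncomputable def phiCoalgHom (Φ : B →ₗc[K] H) : B ⊗[K] H →ₗc[K] H :=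
  (Bialgebra.mulCoalgHom K H).comp (Coalgebra.TensorProduct.map Φ (CoalgHom.id K H))

lemma coe_phiCoalgHom (Φ : B →ₗc[K] H) :
    (phiCoalgHom Φ : B ⊗[K] H →ₗ[K] H) = PhiA K B H Φ := by
  ext; rfl

noncomputable def diagonalActionCoalgHom [IsCocomm K H] (ℓ : H ⊗[K] B →ₗc[K] B) :
    H ⊗[K] (B ⊗[K] H) →ₗc[K] B ⊗[K] H :=
  (Coalgebra.TensorProduct.map ℓ (Bialgebra.mulCoalgHom K H)).comp
    (tensorTensorTensorCommCoalgHom.comp (CoalgHom.rTensor (B ⊗[K] H) (comulCoalgHom K H)))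

noncomputable def vdCoalgHom [IsCocomm K H] (Φ : B →ₗc[K] H) (ℓ : H ⊗[K] B →ₗc[K] B) :
    (B ⊗[K] H) ⊗[K] (B ⊗[K] H) →ₗc[K] B ⊗[K] H :=
  (diagonalActionCoalgHom ℓ).comp (CoalgHom.rTensor (B ⊗[K] H) (phiCoalgHom Φ))

lemma coe_vdCoalgHom [IsCocomm K H] (Φ : B →ₗc[K] H) (ℓ : H ⊗[K] B →ₗc[K] B) :
    (vdCoalgHom Φ ℓ : (B ⊗[K] H) ⊗[K] (B ⊗[K] H) →ₗ[K] B ⊗[K] H) = vdA K B H Φ ℓ := by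
  ext; rfl

noncomputable def dvCoalgHom (Φ : B →ₗc[K] H) :
    (B ⊗[K] H) ⊗[K] (B ⊗[K] H) →ₗc[K] B ⊗[K] H :=
  (CoalgHom.lTensor B (Bialgebra.mulCoalgHom K H)).comp
    ((Coalgebra.TensorProduct.assoc K K B H H :
        (B ⊗[K] H) ⊗[K] H →ₗc[K] B ⊗[K] (H ⊗[K] H)).comp
      (CoalgHom.lTensor (B ⊗[K] H) (phiCoalgHom Φ)))

lemma coe_dvCoalgHom (Φ : B →ₗc[K] H) :
    (dvCoalgHom Φ : (B ⊗[K] H) ⊗[K] (B ⊗[K] H) →ₗ[K] B ⊗[K] H) = dvA K B H Φ := by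
  ext; rfl

lemma comulA_comp_vdA [IsCocomm K H] (Φ : B →ₗc[K] H) (ℓ : H ⊗[K] B →ₗc[K] B) :
    comulA K B H comul ∘ₗ vdA K B H Φ ℓ = TensorProduct.map (vdA K B H Φ ℓ) (vdA K B H Φ ℓ) ∘ₗ
      comul2 K (B ⊗[K] H) (comulA K B H comul) := by
  rw [comulA_eq_comul, ← coe_vdCoalgHom]
  exact comul_comp_eq_map_comp_comul2 (C := B ⊗[K] H) _

lemma counitA_comp_vdA [IsCocomm K H] (Φ : B →ₗc[K] H) (ℓ : H ⊗[K] B →ₗc[K] B) :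
    counitA K B H counit ∘ₗ vdA K B H Φ ℓ = counit2 K (B ⊗[K] H) (counitA K B H counit) := by
  rw [counitA_eq_counit, ← coe_vdCoalgHom]
  exact counit_comp_eq_counit2 (C := B ⊗[K] H) _

lemma comulA_comp_dvA (Φ : B →ₗc[K] H) :
    comulA K B H comul ∘ₗ dvA K B H Φ = TensorProduct.map (dvA K B H Φ) (dvA K B H Φ) ∘ₗ
      comul2 K (B ⊗[K] H) (comulA K B H comul) := by
  rw [comulA_eq_comul, ← coe_dvCoalgHom]
  exact comul_comp_eq_map_comp_comul2 (C := B ⊗[K] H) _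

lemma counitA_comp_dvA (Φ : B →ₗc[K] H) :
    counitA K B H counit ∘ₗ dvA K B H Φ = counit2 K (B ⊗[K] H) (counitA K B H counit) := by
  rw [counitA_eq_counit, ← coe_dvCoalgHom]
  exact counit_comp_eq_counit2 (C := B ⊗[K] H) _

end CoalgHoms

section Dialgebra

open Coalgebra

variable {K : Type*} [CommRing K] {B : Type*} [AddCommGroup B] [Module K B]
  {H : Type*} [Ring H] [HopfAlgebra K H]

lemma vdA_tmul (Φ : B →ₗ[K] H) (ℓ : H ⊗[K] B →ₗ[K] B) (X Y : B ⊗[K] H) :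
    vdA K B H Φ ℓ (X ⊗ₜ[K] Y) = diagonalAction ℓ (PhiA K B H Φ X ⊗ₜ[K] Y) := rfl

lemma dvA_tmul (Φ : B →ₗ[K] H) (X Y : B ⊗[K] H) :
    dvA K B H Φ (X ⊗ₜ[K] Y) = (LinearMap.mulRight K (PhiA K B H Φ Y)).lTensor B X := by
  induction X using TensorProduct.induction_on with
  | zero => simp
  | add X X' hX hX' => rw [TensorProduct.add_tmul, map_add, hX, hX', map_add]
  | tmul b h => simp [dvA]

lemma PhiA_lTensor_mulRight (Φ : B →ₗ[K] H) (k : H) (X : B ⊗[K] H) :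
    PhiA K B H Φ ((LinearMap.mulRight K k).lTensor B X) = PhiA K B H Φ X * k := by
  induction X using TensorProduct.induction_on with
  | zero => simp
  | add X X' hX hX' => simp only [map_add, hX, hX', add_mul]
  | tmul b h => simp [PhiA_tmul, mul_assoc]

lemma PhiA_vdA (Φ : B →ₗ[K] H) (ℓ : H ⊗[K] B →ₗ[K] B)
    (hΦ_equiv : Φ ∘ₗ ℓ = adjointMap K H ∘ₗ TensorProduct.map LinearMap.id Φ) (X Y : B ⊗[K] H) :
    PhiA K B H Φ (vdA K B H Φ ℓ (X ⊗ₜ[K] Y)) = PhiA K B H Φ X * PhiA K B H Φ Y := by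
  rw [vdA_tmul, PhiA_diagonalAction Φ ℓ hΦ_equiv]

lemma PhiA_dvA (Φ : B →ₗ[K] H) (X Y : B ⊗[K] H) :
    PhiA K B H Φ (dvA K B H Φ (X ⊗ₜ[K] Y)) = PhiA K B H Φ X * PhiA K B H Φ Y := by
  rw [dvA_tmul, PhiA_lTensor_mulRight]

theorem vdA_sub_dvA_of_isPrimitive {comulB : B →ₗ[K] B ⊗[K] B} (Φ : B →ₗ[K] H)
    (hΦ_comul : comul ∘ₗ Φ = TensorProduct.map Φ Φ ∘ₗ comulB) {oneB : B} (hΦ_one : Φ oneB = 1)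
    (ℓ : H ⊗[K] B →ₗ[K] B) (hℓ_one : ∀ b : B, ℓ ((1 : H) ⊗ₜ[K] b) = b)
    (hℓ_oneB : ∀ h : H, ℓ (h ⊗ₜ[K] oneB) = counit (R := K) h • oneB) {x : B} {ξ : H}
    (hx : IsPrimitive K B comulB oneB x) (hξ : IsPrimitive K H comul 1 ξ) (y : B) (η : H) :
    vdA K B H Φ ℓ ((x ⊗ₜ[K] (1 : H) + oneB ⊗ₜ[K] ξ) ⊗ₜ[K] (y ⊗ₜ[K] (1 : H) + oneB ⊗ₜ[K] η))
        - dvA K B H Φ ((y ⊗ₜ[K] (1 : H) + oneB ⊗ₜ[K] η) ⊗ₜ[K] (x ⊗ₜ[K] (1 : H) + oneB ⊗ₜ[K] ξ))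
      = (ℓ (Φ x ⊗ₜ[K] y) + ℓ (ξ ⊗ₜ[K] y)) ⊗ₜ[K] (1 : H)
        + oneB ⊗ₜ[K] ((Φ x * η - η * Φ x) + (ξ * η - η * ξ)) := by
  have hp : IsPrimitive K H comul 1 (Φ x + ξ) := (hΦ_one ▸ hx.map Φ hΦ_comul).add hξ
  have hPhi : PhiA K B H Φ (x ⊗ₜ[K] (1 : H) + oneB ⊗ₜ[K] ξ) = Φ x + ξ := by
    simp [PhiA_tmul, hΦ_one]
  rw [vdA_tmul, dvA_tmul, hPhi, TensorProduct.tmul_add, map_add,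
    diagonalAction_tmul_tmul_of_isPrimitive ℓ hℓ_one hp,
    diagonalAction_tmul_tmul_of_isPrimitive ℓ hℓ_one hp, hℓ_oneB,
    hp.counit_eq_zero Bialgebra.counit_one, zero_smul, TensorProduct.zero_tmul]
  simp only [map_add, LinearMap.lTensor_tmul, LinearMap.mulRight_apply, add_mul, mul_add,
    TensorProduct.add_tmul, TensorProduct.tmul_add, TensorProduct.tmul_sub, one_mul, mul_one]
  abel

variable [Coalgebra K B]

lemma vdA_map_SA_comulA (Φ : B →ₗc[K] H) (ℓ : H ⊗[K] B →ₗ[K] B) {oneB : B}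
    (hℓ_oneB : ∀ h : H, ℓ (h ⊗ₜ[K] oneB) = counit (R := K) h • oneB) (X : B ⊗[K] H) :
    vdA K B H Φ ℓ (TensorProduct.map LinearMap.id (SA K B H Φ oneB) (comulA K B H comul X)) =
      counitA K B H counit X • (oneB ⊗ₜ[K] (1 : H)) := by
  have expand (Z : (B ⊗[K] H) ⊗[K] (B ⊗[K] H)) :
      vdA K B H Φ ℓ (TensorProduct.map LinearMap.id (SA K B H Φ oneB) Z) = oneB ⊗ₜ[K]
        LinearMap.mul' K H ((HopfAlgebra.antipode K).lTensor H
          (TensorProduct.map (PhiA K B H Φ) (PhiA K B H Φ) Z)) := by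
    induction Z using TensorProduct.induction_on with
    | zero => simp
    | add Z Z' hZ hZ' => simp only [map_add, hZ, hZ', TensorProduct.tmul_add]
    | tmul X Y => simp [SA, vdA_tmul, diagonalAction_tmul_one_tmul ℓ hℓ_oneB]
  rw [expand, comulA_eq_comul, counitA_eq_counit, ← coe_phiCoalgHom,
    CoalgHomClass.map_comp_comul_apply, HopfAlgebra.mul_antipode_lTensor_comul_apply,
    CoalgHomClass.counit_comp_apply, Algebra.algebraMap_eq_smul_one, TensorProduct.tmul_smul]

lemma dvA_map_SA_comulA (Φ : B →ₗc[K] H) (oneB : B) (X : B ⊗[K] H) :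
    dvA K B H Φ (TensorProduct.map (SA K B H Φ oneB) LinearMap.id (comulA K B H comul X)) =
      counitA K B H counit X • (oneB ⊗ₜ[K] (1 : H)) := by
  have expand (Z : (B ⊗[K] H) ⊗[K] (B ⊗[K] H)) :
      dvA K B H Φ (TensorProduct.map (SA K B H Φ oneB) LinearMap.id Z) = oneB ⊗ₜ[K]
        LinearMap.mul' K H ((HopfAlgebra.antipode K).rTensor H
          (TensorProduct.map (PhiA K B H Φ) (PhiA K B H Φ) Z)) := by
    induction Z using TensorProduct.induction_on with
    | zero => simp
    | add Z Z' hZ hZ' => simp only [map_add, hZ, hZ', TensorProduct.tmul_add]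
    | tmul X Y => simp [SA, dvA_tmul]
  rw [expand, comulA_eq_comul, counitA_eq_counit, ← coe_phiCoalgHom,
    CoalgHomClass.map_comp_comul_apply, HopfAlgebra.mul_antipode_rTensor_comul_apply,
    CoalgHomClass.counit_comp_apply, Algebra.algebraMap_eq_smul_one, TensorProduct.tmul_smul]

theorem isHopfDialgebra_tensor [IsCocomm K B] [IsCocomm K H] {oneB : B}
    (comul_oneB : comul oneB = oneB ⊗ₜ[K] oneB) (counit_oneB : counit (R := K) oneB = 1)
    (Φ : B →ₗ[K] H) (hΦ_comul : comul ∘ₗ Φ = TensorProduct.map Φ Φ ∘ₗ comul)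
    (hΦ_counit : counit ∘ₗ Φ = counit) (hΦ_one : Φ oneB = 1) (ℓ : H ⊗[K] B →ₗ[K] B)
    (hℓ_one : ∀ b : B, ℓ ((1 : H) ⊗ₜ[K] b) = b)
    (hℓ_mul : ∀ (h h' : H) (b : B), ℓ ((h * h') ⊗ₜ[K] b) = ℓ (h ⊗ₜ[K] ℓ (h' ⊗ₜ[K] b)))
    (hℓ_comul : comul ∘ₗ ℓ = TensorProduct.map ℓ ℓ ∘ₗ
        (TensorProduct.tensorTensorTensorComm K H H B B).toLinearMap ∘ₗ
        TensorProduct.map comul comul)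
    (hℓ_counit : counit ∘ₗ ℓ = LinearMap.mul' K K ∘ₗ TensorProduct.map counit counit)
    (hℓ_oneB : ∀ h : H, ℓ (h ⊗ₜ[K] oneB) = counit (R := K) h • oneB)
    (hΦ_equiv : Φ ∘ₗ ℓ = adjointMap K H ∘ₗ TensorProduct.map LinearMap.id Φ) :
    IsHopfDialgebra K (B ⊗[K] H) (comulA K B H comul) (counitA K B H counit)
      (oneB ⊗ₜ[K] (1 : H)) (vdA K B H Φ ℓ) (dvA K B H Φ) (SA K B H Φ oneB) := by
  rw [tensorTensorTensorComm_comp_map_comul] at hℓ_comul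
  rw [mul'_comp_map_counit] at hℓ_counit
  let Φc : B →ₗc[K] H := ⟨Φ, hΦ_counit, hΦ_comul.symm⟩
  let ℓc : H ⊗[K] B →ₗc[K] B := ⟨ℓ, hℓ_counit, hℓ_comul.symm⟩
  exact {
    isC3 := by
      rw [comulA_eq_comul, counitA_eq_counit]
      exact .of_coalgebra (by simp [comul_oneB, Algebra.TensorProduct.one_def])
        (by simp [counit_oneB])
    cocomm := by
      rw [comulA_eq_comul]
      exact comm_comul K
    comul_vd := comulA_comp_vdA Φc ℓc
    counit_vd := counitA_comp_vdA Φc ℓc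
    comul_dv := comulA_comp_dvA Φc
    counit_dv := counitA_comp_dvA Φc
    vd_assoc a b c := by
      simp only [vdA_tmul, PhiA_diagonalAction Φ ℓ hΦ_equiv, diagonalAction_mul ℓ hℓ_mul]
    dv_assoc a b c := by
      simp only [dvA_tmul, PhiA_lTensor_mulRight, LinearMap.mulRight_mul, LinearMap.lTensor_comp,
        LinearMap.comp_apply]
    di_ax1 a b c := by simp only [vdA_tmul, PhiA_diagonalAction Φ ℓ hΦ_equiv, PhiA_dvA]
    di_ax2 a b c := by simp only [dvA_tmul, PhiA_lTensor_mulRight, PhiA_vdA Φ ℓ hΦ_equiv]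
    di_ax3 a b c := by simp only [dvA_tmul, vdA_tmul, lTensor_mulRight_diagonalAction]
    one_vd a := by rw [vdA_tmul, PhiA_tmul, hΦ_one, one_mul, diagonalAction_one ℓ hℓ_one]
    dv_one a := by
      rw [dvA_tmul, PhiA_tmul, hΦ_one, one_mul, LinearMap.mulRight_one, LinearMap.lTensor_id,
        LinearMap.id_apply]
    balanced a := by
      rw [vdA_tmul, diagonalAction_tmul_one_tmul ℓ hℓ_oneB, mul_one, dvA_tmul]
      simp
    right_antipode_vd := vdA_map_SA_comulA Φc ℓ hℓ_oneB
    left_antipode_dv := dvA_map_SA_comulA Φc oneB }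

end Dialgebra

theorem augmented_rack_bialgebra_gives_hopf_dialgebra_general
    (K : Type*) [CommRing K]
    (B : Type*) [AddCommGroup B] [Module K B]
    (comulB : B →ₗ[K] B ⊗[K] B) (counitB : B →ₗ[K] K) (oneB : B)
    (hB : IsC3Coalgebra K B comulB counitB oneB)
    (cocommB : ∀ b : B, (TensorProduct.comm K B B) (comulB b) = comulB b)
    (H : Type*) [Ring H] [HopfAlgebra K H]
    (cocommH : ∀ h : H,
      (TensorProduct.comm K H H) (Coalgebra.comul h) = Coalgebra.comul (R := K) h)
    (ΦB : B →ₗ[K] H)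
    (hΦ_comul : Coalgebra.comul ∘ₗ ΦB = TensorProduct.map ΦB ΦB ∘ₗ comulB)
    (hΦ_counit : Coalgebra.counit ∘ₗ ΦB = counitB)
    (hΦ_one : ΦB oneB = 1)
    (ℓ : H ⊗[K] B →ₗ[K] B)
    (hℓ_one : ∀ b : B, ℓ ((1 : H) ⊗ₜ[K] b) = b)
    (hℓ_mul : ∀ (h h' : H) (b : B), ℓ ((h * h') ⊗ₜ[K] b) = ℓ (h ⊗ₜ[K] ℓ (h' ⊗ₜ[K] b)))
    (hℓ_comul : comulB ∘ₗ ℓ = TensorProduct.map ℓ ℓ ∘ₗ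
        (tensorTensorTensorComm K H H B B).toLinearMap ∘ₗ
        TensorProduct.map Coalgebra.comul comulB)
    (hℓ_counit : counitB ∘ₗ ℓ
        = LinearMap.mul' K K ∘ₗ TensorProduct.map Coalgebra.counit counitB)
    (hℓ_oneB : ∀ h : H, ℓ (h ⊗ₜ[K] oneB) = Coalgebra.counit (R := K) h • oneB)
    (hΦ_equiv : ΦB ∘ₗ ℓ = adjointMap K H ∘ₗ TensorProduct.map LinearMap.id ΦB) :
    IsHopfDialgebra K (B ⊗[K] H) (comulA K B H comulB) (counitA K B H counitB)
      (oneB ⊗ₜ[K] (1 : H)) (vdA K B H ΦB ℓ) (dvA K B H ΦB) (SA K B H ΦB oneB) ∧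
    (∀ (x y : B) (ξ η : H),
      IsPrimitive K B comulB oneB x → IsPrimitive K B comulB oneB y →
      Coalgebra.comul ξ = ξ ⊗ₜ[K] (1 : H) + (1 : H) ⊗ₜ[K] ξ →
      Coalgebra.comul η = η ⊗ₜ[K] (1 : H) + (1 : H) ⊗ₜ[K] η →
      vdA K B H ΦB ℓ ((x ⊗ₜ[K] (1 : H) + oneB ⊗ₜ[K] ξ) ⊗ₜ[K] (y ⊗ₜ[K] (1 : H) + oneB ⊗ₜ[K] η))
        - dvA K B H ΦB ((y ⊗ₜ[K] (1 : H) + oneB ⊗ₜ[K] η) ⊗ₜ[K] (x ⊗ₜ[K] (1 : H) + oneB ⊗ₜ[K] ξ))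
      = (ℓ (ΦB x ⊗ₜ[K] y) + ℓ (ξ ⊗ₜ[K] y)) ⊗ₜ[K] (1 : H)
        + oneB ⊗ₜ[K] ((ΦB x * η - η * ΦB x) + (ξ * η - η * ξ))) := by
  let _ : Coalgebra K B := hB.toCoalgebra
  have _ : Coalgebra.IsCocomm K B := ⟨LinearMap.ext cocommB⟩
  have _ : Coalgebra.IsCocomm K H := ⟨LinearMap.ext cocommH⟩
  refine ⟨isHopfDialgebra_tensor hB.comul_one hB.counit_one ΦB hΦ_comul hΦ_counit hΦ_one ℓ
    hℓ_one hℓ_mul hℓ_comul hℓ_counit hℓ_oneB hΦ_equiv, ?_⟩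
  intro x y ξ η hx _ hξ _
  exact vdA_sub_dvA_of_isPrimitive ΦB hΦ_comul hΦ_one ℓ hℓ_one hℓ_oneB hx hξ y η

/-- Let `(B, Φ_B, H, ℓ)` be an augmented rack bialgebra over `K` whose
underlying coalgebra `B` is cocommutative.  On the tensor-product coalgebra `B ⊗ H` define
`Φ(b⊗h) := Φ_B(b)h`, the two products
`(b⊗h) ⊢ (b'⊗h') := Σ ((Φ_B(b)h)⁽¹⁾.b') ⊗ ((Φ_B(b)h)⁽²⁾h')` and
`(b⊗h) ⊣ (b'⊗h') := b ⊗ (h·Φ_B(b')h')`, and `S(b⊗h) := 1_B ⊗ S_H(Φ_B(b)h)`.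
Then `(B⊗H, Δ_{B⊗H}, ε_B⊗ε_H, 1_B⊗1_H, ⊢, ⊣, S)` is a cocommutative Hopf dialgebra.
Moreover, identifying `x ∈ Prim(B)` with `x⊗1_H` and `ξ ∈ Prim(H)` with `1_B⊗ξ`, the
Leibniz bracket `[u,v] := u ⊢ v - v ⊣ u` on `Prim(B⊗H) = Prim(B) ⊕ Prim(H)` is given by
`[x+ξ, y+η] = ([x,y] + ξ.y) + ([Φ_B(x),η] + [ξ,η])` where `[x,y] = Φ_B(x).y` and the
brackets in `H` are commutators. -/
theorem augmented_rack_bialgebra_gives_hopf_dialgebra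
    (K : Type*) [CommRing K] [Algebra ℚ K]
    (B : Type*) [AddCommGroup B] [Module K B]
    (comulB : B →ₗ[K] B ⊗[K] B) (counitB : B →ₗ[K] K) (oneB : B)
    (hB : IsC3Coalgebra K B comulB counitB oneB)
    (cocommB : ∀ b : B, (TensorProduct.comm K B B) (comulB b) = comulB b)
    (H : Type*) [Ring H] [HopfAlgebra K H]
    (cocommH : ∀ h : H,
      (TensorProduct.comm K H H) (Coalgebra.comul h) = Coalgebra.comul (R := K) h)
    (ΦB : B →ₗ[K] H)
    (hΦ_comul : Coalgebra.comul ∘ₗ ΦB = TensorProduct.map ΦB ΦB ∘ₗ comulB)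
    (hΦ_counit : Coalgebra.counit ∘ₗ ΦB = counitB)
    (hΦ_one : ΦB oneB = 1)
    (ℓ : H ⊗[K] B →ₗ[K] B)
    (hℓ_one : ∀ b : B, ℓ ((1 : H) ⊗ₜ[K] b) = b)
    (hℓ_mul : ∀ (h h' : H) (b : B), ℓ ((h * h') ⊗ₜ[K] b) = ℓ (h ⊗ₜ[K] ℓ (h' ⊗ₜ[K] b)))
    (hℓ_comul : comulB ∘ₗ ℓ = TensorProduct.map ℓ ℓ ∘ₗ
        (tensorTensorTensorComm K H H B B).toLinearMap ∘ₗ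
        TensorProduct.map Coalgebra.comul comulB)
    (hℓ_counit : counitB ∘ₗ ℓ
        = LinearMap.mul' K K ∘ₗ TensorProduct.map Coalgebra.counit counitB)
    (hℓ_oneB : ∀ h : H, ℓ (h ⊗ₜ[K] oneB) = Coalgebra.counit (R := K) h • oneB)
    (hΦ_equiv : ΦB ∘ₗ ℓ = adjointMap K H ∘ₗ TensorProduct.map LinearMap.id ΦB) :
    IsHopfDialgebra K (B ⊗[K] H) (comulA K B H comulB) (counitA K B H counitB)
      (oneB ⊗ₜ[K] (1 : H)) (vdA K B H ΦB ℓ) (dvA K B H ΦB) (SA K B H ΦB oneB) ∧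
    (∀ (x y : B) (ξ η : H),
      IsPrimitive K B comulB oneB x → IsPrimitive K B comulB oneB y →
      Coalgebra.comul ξ = ξ ⊗ₜ[K] (1 : H) + (1 : H) ⊗ₜ[K] ξ →
      Coalgebra.comul η = η ⊗ₜ[K] (1 : H) + (1 : H) ⊗ₜ[K] η →
      vdA K B H ΦB ℓ ((x ⊗ₜ[K] (1 : H) + oneB ⊗ₜ[K] ξ) ⊗ₜ[K] (y ⊗ₜ[K] (1 : H) + oneB ⊗ₜ[K] η))
        - dvA K B H ΦB ((y ⊗ₜ[K] (1 : H) + oneB ⊗ₜ[K] η) ⊗ₜ[K] (x ⊗ₜ[K] (1 : H) + oneB ⊗ₜ[K] ξ))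
      = (ℓ (ΦB x ⊗ₜ[K] y) + ℓ (ξ ⊗ₜ[K] y)) ⊗ₜ[K] (1 : H)
        + oneB ⊗ₜ[K] ((ΦB x * η - η * ΦB x) + (ξ * η - η * ξ))) :=
  augmented_rack_bialgebra_gives_hopf_dialgebra_general K B comulB counitB oneB hB cocommB H cocommH
    ΦB hΦ_comul hΦ_counit hΦ_one ℓ hℓ_one hℓ_mul hℓ_comul hℓ_counit hℓ_oneB hΦ_equiv

end RackPaper
end

section
/- Let (𝔥,[·,·]) be a Leibniz algebra over K. On UR(𝔥) := K ⊕ 𝔥 define Δ(λ1+x) = λ1⊗1 + x⊗1 + 1⊗x, ε(λ1+x) = λ, and (λ1+x)▹(λ′1+x′) = λλ′1 + λx′ + [x,x′]. Then UR(𝔥) is a rack bialgebra with Prim(UR(𝔥)) = 𝔥, and it has the universal property: for every rack bialgebra C over K and every K-linear map f : 𝔥 → Prim(C) satisfying f([x,y]) = f(x)▹f(y) for all x,y ∈ 𝔥, the map f̂(λ1+x) := λ1_C + f(x) is the unique morphism of rack bialgebras UR(𝔥) → C whose restriction to 𝔥 is f. (This exhibits UR as a left adjoint of the functor Prim.) 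-/
open TensorProduct

namespace RackPaper

variable (K : Type*) [CommRing K]
variable (B : Type*) [AddCommGroup B] [Module K B]

section UR

variable (L : Type*) [AddCommGroup L] [Module K L] (br : L →ₗ[K] L →ₗ[K] L)

/-- The coaugmentation `1` of `UR(𝔥) = K ⊕ 𝔥`. -/
def oneUR : K × L := (1, 0)

/-- The counit `ε(λ1 + x) = λ` of `UR(𝔥)`. -/
def counitUR : K × L →ₗ[K] K := LinearMap.fst K K L

/-- The comultiplication `Δ(λ1 + x) = λ 1⊗1 + x⊗1 + 1⊗x` of `UR(𝔥)`. -/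
noncomputable def comulUR : (K × L) →ₗ[K] (K × L) ⊗[K] (K × L) :=
  (LinearMap.fst K K L).smulRight (oneUR K L ⊗ₜ[K] oneUR K L)
  + ((TensorProduct.mk K (K × L) (K × L)).flip (oneUR K L)) ∘ₗ
      (LinearMap.inr K K L) ∘ₗ (LinearMap.snd K K L)
  + (TensorProduct.mk K (K × L) (K × L) (oneUR K L)) ∘ₗ
      (LinearMap.inr K K L) ∘ₗ (LinearMap.snd K K L)

/-- The multiplication `(λ1 + x) ▹ (λ'1 + x') = λλ'1 + λx' + [x,x']` of `UR(𝔥)`. -/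
noncomputable def mulUR : (K × L) ⊗[K] (K × L) →ₗ[K] K × L :=
  TensorProduct.lift (LinearMap.mk₂ K
    (fun p q => (p.1 * q.1, p.1 • q.2 + br p.2 q.2))
    (by intro p p' q
        apply Prod.ext <;>
          simp [add_mul, add_smul, mul_left_comm, smul_comm, smul_smul, mul_assoc] <;> abel)
    (by intro c p q
        apply Prod.ext <;>
          simp [mul_assoc, mul_left_comm, smul_smul, smul_comm c, smul_add, mul_comm])
    (by intro p q q'
        apply Prod.ext <;>
          simp [mul_add, smul_add, mul_left_comm] <;> abel)
    (by intro c p q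
        apply Prod.ext <;>
          simp [mul_left_comm, smul_comm c, smul_add, mul_smul]))

end UR


section Aux
variable {K : Type*} [CommRing K]
variable {L : Type*} [AddCommGroup L] [Module K L] (br : L →ₗ[K] L →ₗ[K] L)

lemma comulUR_apply (a : K) (x : L) :
    comulUR K L (a, x) = a • (oneUR K L ⊗ₜ[K] oneUR K L)
      + ((0:K), x) ⊗ₜ[K] oneUR K L + oneUR K L ⊗ₜ[K] ((0:K), x) := by
  simp [comulUR, TensorProduct.mk_apply]

lemma mulUR_apply (a b : K) (x y : L) :
    mulUR K L br ((a, x) ⊗ₜ[K] (b, y)) = (a * b, a • y + br x y) := by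
  simp [mulUR]

omit [Module K L] in
lemma pair_split (u v : L) : ((0:K), u + v) = ((0:K), u) + ((0:K), v) := by simp

lemma pair_smul (c : K) (u : L) : ((0:K), c • u) = c • ((0:K), u) := by simp

lemma key_tmul (a : K) (y : L) :
    (((1:K),(0:L)) : K × L) ⊗ₜ[K] (((0:K), a • y) : K × L)
      = ((a,(0:L)) : K × L) ⊗ₜ[K] (((0:K), y) : K × L) := by
  rw [pair_smul, tmul_smul, smul_tmul']
  simp

lemma comulUR_one : comulUR K L (oneUR K L) = oneUR K L ⊗ₜ[K] oneUR K L := by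
  have : oneUR K L = ((1:K), (0:L)) := rfl
  have h0 : ((0:K),(0:L)) = (0 : K × L) := rfl
  rw [this, comulUR_apply, h0]
  simp [this]

lemma coassocUR : (TensorProduct.assoc K (K×L) (K×L) (K×L)).toLinearMap ∘ₗ
      (TensorProduct.map (comulUR K L) LinearMap.id) ∘ₗ comulUR K L
      = (TensorProduct.map LinearMap.id (comulUR K L)) ∘ₗ comulUR K L := by
  refine LinearMap.ext fun p => ?_
  obtain ⟨a, x⟩ := p
  simp [comulUR_apply, comulUR_one, tmul_add, add_tmul, smul_tmul']
  abel

lemma counit_comulUR : (TensorProduct.lid K (K×L)).toLinearMap ∘ₗ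
      (TensorProduct.map (counitUR K L) LinearMap.id) ∘ₗ comulUR K L = LinearMap.id := by
  refine LinearMap.ext fun p => ?_
  obtain ⟨a, x⟩ := p
  simp [comulUR_apply, counitUR, oneUR, Prod.smul_mk]

lemma comul_counitUR : (TensorProduct.rid K (K×L)).toLinearMap ∘ₗ
      (TensorProduct.map LinearMap.id (counitUR K L)) ∘ₗ comulUR K L = LinearMap.id := by
  refine LinearMap.ext fun p => ?_
  obtain ⟨a, x⟩ := p
  simp [comulUR_apply, counitUR, oneUR, Prod.smul_mk]

lemma one_mulUR : ∀ a : K × L, mulUR K L br (oneUR K L ⊗ₜ[K] a) = a := by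
  rintro ⟨b, y⟩
  have : oneUR K L = ((1:K), (0:L)) := rfl
  rw [this, mulUR_apply]; simp

lemma mul_oneUR : ∀ a : K × L,
    mulUR K L br (a ⊗ₜ[K] oneUR K L) = counitUR K L a • oneUR K L := by
  rintro ⟨a, x⟩
  have : oneUR K L = ((1:K), (0:L)) := rfl
  rw [this, mulUR_apply]; simp [counitUR, this]

lemma counit_mulUR : counitUR K L ∘ₗ mulUR K L br = counit2 K (K × L) (counitUR K L) := by
  apply TensorProduct.ext'
  rintro ⟨a, x⟩ ⟨b, y⟩
  simp [mulUR_apply, counit2, counitUR]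

lemma comul_mulUR : comulUR K L ∘ₗ mulUR K L br
    = (TensorProduct.map (mulUR K L br) (mulUR K L br)) ∘ₗ comul2 K (K × L) (comulUR K L) := by
  apply TensorProduct.ext'
  rintro ⟨a, x⟩ ⟨b, y⟩
  have h1 : oneUR K L = ((1:K), (0:L)) := rfl
  simp only [LinearMap.comp_apply, comul2, LinearEquiv.coe_coe, map_tmul,
    mulUR_apply, comulUR_apply, h1]
  simp only [tmul_add, add_tmul, smul_tmul', tmul_smul, map_add, map_smul,
    tensorTensorTensorComm_tmul, map_tmul, mulUR_apply]
  have h0 : ((0:K),(0:L)) = (0 : K × L) := rfl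
  simp only [Prod.smul_mk, smul_eq_mul, mul_one, mul_zero, one_mul, zero_mul, smul_zero,
    mulUR_apply, map_zero, LinearMap.zero_apply, zero_smul, add_zero, zero_add,
    pair_split, add_tmul, tmul_add, h0, zero_tmul, tmul_zero, one_smul, mul_comm b a,
    key_tmul]

lemma self_distribUR
    (leibniz : ∀ x y z : L, br x (br y z) = br (br x y) z + br y (br x z)) :
    mulUR K L br ∘ₗ TensorProduct.map LinearMap.id (mulUR K L br)
      = mulUR K L br ∘ₗ TensorProduct.map (mulUR K L br) (mulUR K L br) ∘ₗ
          (tensorTensorTensorComm K (K×L) (K×L) (K×L) (K×L)).toLinearMap ∘ₗ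
          TensorProduct.map (comulUR K L) LinearMap.id := by
  apply TensorProduct.ext'
  intro p w
  induction w using TensorProduct.induction_on with
  | zero => simp
  | add u v hu hv => simp only [tmul_add, map_add, hu, hv]
  | tmul q r =>
    obtain ⟨a, x⟩ := p; obtain ⟨b, y⟩ := q; obtain ⟨c, z⟩ := r
    have h1 : oneUR K L = ((1:K), (0:L)) := rfl
    simp only [LinearMap.comp_apply, LinearEquiv.coe_coe, map_tmul, LinearMap.id_coe, id_eq,
      mulUR_apply, comulUR_apply, h1]
    simp only [tmul_add, add_tmul, smul_tmul', tmul_smul, map_add, map_smul,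
      tensorTensorTensorComm_tmul, map_tmul, mulUR_apply]
    simp only [map_smul, smul_tmul', tmul_smul, Prod.smul_mk, smul_eq_mul, mul_one, mul_zero,
      smul_zero, mulUR_apply, one_smul, zero_smul, map_zero, LinearMap.zero_apply, add_zero,
      zero_add, one_mul, zero_mul, Prod.mk_add_mk, map_add, LinearMap.add_apply, smul_add,
      LinearMap.smul_apply]
    apply Prod.ext
    · simp; ring
    · simp only [smul_smul, leibniz x y z]
      abel

section UPAux
variable {C : Type*} [AddCommGroup C] [Module K C]
variable (comulC : C →ₗ[K] C ⊗[K] C) (counitC : C →ₗ[K] K) (oneC : C) (mulC : C ⊗[K] C →ₗ[K] C)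
variable (f : L →ₗ[K] C)

lemma fhat_apply (a : K) (x : L) :
    ((counitUR K L).smulRight oneC + f ∘ₗ LinearMap.snd K K L) (a, x) = a • oneC + f x := by
  simp [counitUR]

omit [Module K L] in
lemma counit_prim
    (hcc : (TensorProduct.lid K C).toLinearMap ∘ₗ
      (TensorProduct.map counitC LinearMap.id) ∘ₗ comulC = LinearMap.id)
    (h1 : counitC oneC = 1)
    (c : C) (hx : IsPrimitive K C comulC oneC c) : counitC c = 0 := by
  have hx' : comulC c = c ⊗ₜ[K] oneC + oneC ⊗ₜ[K] c := hx
  have h := congrArg (fun φ => φ c) hcc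
  simp only [LinearMap.comp_apply, LinearMap.id_coe, id_eq, hx', map_add, map_tmul,
    LinearEquiv.coe_coe, LinearMap.id_apply, lid_tmul, h1, one_smul] at h
  have h2 : counitC c • oneC = 0 := by
    have h' : counitC c • oneC + c = 0 + c := by rw [h, zero_add]
    exact add_right_cancel h'
  have h3 := congrArg counitC h2
  simpa [h1] using h3

end UPAux
end Aux

/-- Let `(𝔥, [·,·])` be a Leibniz algebra over `K`.  On
`UR(𝔥) := K ⊕ 𝔥` define `Δ(λ1+x) = λ1⊗1 + x⊗1 + 1⊗x`, `ε(λ1+x) = λ` and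
`(λ1+x) ▹ (λ'1+x') = λλ'1 + λx' + [x,x']`.  Then `UR(𝔥)` is a rack bialgebra with
`Prim(UR(𝔥)) = 𝔥`, and it has the universal property: for every rack bialgebra `C` over `K`
and every `K`-linear map `f : 𝔥 → Prim(C)` with `f([x,y]) = f(x) ▹ f(y)`, the map
`f̂(λ1+x) := λ1_C + f(x)` is the unique morphism of rack bialgebras `UR(𝔥) → C` whose
restriction to `𝔥` is `f`.  (This exhibits `UR` as a left adjoint of `Prim`.) -/
theorem universal_rack_bialgebra
    (K : Type*) [CommRing K] [Algebra ℚ K]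
    (L : Type*) [AddCommGroup L] [Module K L] (br : L →ₗ[K] L →ₗ[K] L)
    (leibniz : ∀ x y z : L, br x (br y z) = br (br x y) z + br y (br x z)) :
    -- `UR(𝔥)` is a rack bialgebra
    IsRackBialgebra K (K × L) (comulUR K L) (counitUR K L) (oneUR K L) (mulUR K L br) ∧
    -- its primitives are exactly `𝔥 = {0} × L`
    (∀ p : K × L,
      IsPrimitive K (K × L) (comulUR K L) (oneUR K L) p ↔ p.1 = 0) ∧
    -- the universal property
    (∀ (C : Type*) (_ : AddCommGroup C), ∀ (_ : Module K C),
      ∀ (comulC : C →ₗ[K] C ⊗[K] C) (counitC : C →ₗ[K] K) (oneC : C)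
        (mulC : C ⊗[K] C →ₗ[K] C),
      IsRackBialgebra K C comulC counitC oneC mulC →
      ∀ f : L →ₗ[K] C,
        (∀ x : L, IsPrimitive K C comulC oneC (f x)) →
        (∀ x y : L, f (br x y) = mulC (f x ⊗ₜ[K] f y)) →
        -- f̂ is a morphism of rack bialgebras restricting to f on 𝔥 ...
        ((comulC ∘ₗ ((counitUR K L).smulRight oneC + f ∘ₗ LinearMap.snd K K L)
            = TensorProduct.map ((counitUR K L).smulRight oneC + f ∘ₗ LinearMap.snd K K L)
                ((counitUR K L).smulRight oneC + f ∘ₗ LinearMap.snd K K L) ∘ₗ comulUR K L) ∧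
         (counitC ∘ₗ ((counitUR K L).smulRight oneC + f ∘ₗ LinearMap.snd K K L)
            = counitUR K L) ∧
         (((counitUR K L).smulRight oneC + f ∘ₗ LinearMap.snd K K L) (oneUR K L) = oneC) ∧
         (((counitUR K L).smulRight oneC + f ∘ₗ LinearMap.snd K K L) ∘ₗ mulUR K L br
            = mulC ∘ₗ TensorProduct.map
                ((counitUR K L).smulRight oneC + f ∘ₗ LinearMap.snd K K L)
                ((counitUR K L).smulRight oneC + f ∘ₗ LinearMap.snd K K L)) ∧
         (∀ x : L, ((counitUR K L).smulRight oneC + f ∘ₗ LinearMap.snd K K L) (0, x) = f x)) ∧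
        -- ... and is the unique such morphism
        (∀ g : K × L →ₗ[K] C,
          (comulC ∘ₗ g = TensorProduct.map g g ∘ₗ comulUR K L) →
          (counitC ∘ₗ g = counitUR K L) →
          (g (oneUR K L) = oneC) →
          (g ∘ₗ mulUR K L br = mulC ∘ₗ TensorProduct.map g g) →
          (∀ x : L, g (0, x) = f x) →
          g = (counitUR K L).smulRight oneC + f ∘ₗ LinearMap.snd K K L)) := by
  constructor
  · refine ⟨⟨coassocUR, counit_comulUR, comul_counitUR, comulUR_one, rfl⟩,
      comul_mulUR br, counit_mulUR br, one_mulUR br, mul_oneUR br, self_distribUR br leibniz⟩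
  constructor
  · rintro ⟨a, x⟩
    have h1 : oneUR K L = ((1:K), (0:L)) := rfl
    constructor
    · intro h
      have h' : comulUR K L (a, x)
          = (a, x) ⊗ₜ[K] oneUR K L + oneUR K L ⊗ₜ[K] (a, x) := h
      have h2 := congrArg (counit2 K (K × L) (counitUR K L)) h'
      simp only [comulUR_apply, h1, map_add, map_smul, counit2, counitUR,
        LinearMap.comp_apply, map_tmul, LinearMap.mul'_apply, LinearMap.fst_apply,
        mul_one, one_mul, mul_zero, zero_mul, smul_eq_mul] at h2
      have h3 : a = a + a := by simpa using h2
      exact left_eq_add.mp h3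
    · rintro h
      show comulUR K L (a, x) = _
      simp only [comulUR_apply, h1]
      subst h
      simp
  · intro C _ _ comulC counitC oneC mulC hC f hprim hf
    have hcc := hC.isC3.counit_comul
    have hc1 := hC.isC3.counit_one
    have hprim0 : ∀ x : L, counitC (f x) = 0 := fun x =>
      counit_prim comulC counitC oneC hcc hc1 (f x) (hprim x)
    constructor
    · refine ⟨?_, ?_, ?_, ?_, ?_⟩
      · -- comul compatibility
        refine LinearMap.ext fun p => ?_
        obtain ⟨a, x⟩ := p
        have h1 : oneUR K L = ((1:K), (0:L)) := rfl
        have hx : comulC (f x) = f x ⊗ₜ[K] oneC + oneC ⊗ₜ[K] f x := hprim x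
        simp only [LinearMap.comp_apply, comulUR_apply, h1, map_add, map_smul, map_tmul,
          fhat_apply, hC.isC3.comul_one, hx]
        simp [tmul_add, add_tmul, tmul_smul, smul_tmul']
        abel
      · -- counit compatibility
        refine LinearMap.ext fun p => ?_
        obtain ⟨a, x⟩ := p
        simp [fhat_apply, hprim0 x, hc1, counitUR]
      · -- one
        have h1 : oneUR K L = ((1:K), (0:L)) := rfl
        rw [h1, fhat_apply]; simp
      · -- mul compatibility
        apply TensorProduct.ext'
        rintro ⟨a, x⟩ ⟨b, y⟩
        simp only [LinearMap.comp_apply, map_tmul, mulUR_apply, fhat_apply, map_add, map_smul,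
          tmul_add, add_tmul, tmul_smul, ← smul_tmul', hC.one_mul, hC.mul_one,
          hprim0, zero_smul, smul_zero, hc1, hf]
        simp [smul_smul, mul_comm, smul_add, hC.one_mul, hC.mul_one, hprim0]
      · -- restriction
        intro x
        rw [fhat_apply]; simp
    · -- uniqueness
      intro g _ _ hone hres
      intro hres'
      refine LinearMap.ext fun p => ?_
      obtain ⟨a, x⟩ := p
      have hp : ((a, x) : K × L) = a • oneUR K L + ((0:K), x) := by
        simp [oneUR, Prod.ext_iff]
      rw [hp, map_add, map_smul, hone, hres']
      simp [counitUR, oneUR]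

end RackPaper
end

section
/- Let (R,Δ,ε,1,▹) be a cocommutative rack bialgebra over K and define μ¹ = id_R and μⁿ = μ∘(id_R⊗μⁿ⁻¹), so μⁿ(r₁,…,rₙ) = r₁▹(r₂▹(⋯(rₙ₋₁▹rₙ)⋯)). Then for every n ≥ 1 the map μⁿ : R^⊗n → R is a morphism of coalgebras, and for all 1 ≤ i < n and r₁,…,rₙ₊₁ ∈ R one has Σ μ^i(r₁⁽¹⁾,…,r_{i−1}⁽¹⁾,r_i) ▹ μ^{n−1}(r₁⁽²⁾,…,r_{i−1}⁽²⁾,r_{i+1},…,rₙ) = μⁿ(r₁,…,rₙ) and Σ μⁿ(r₁,…,r_{i−1}, r_i⁽¹⁾▹r_{i+1}, …, r_i⁽ⁿ⁺¹⁻ⁱ⁾▹r_{n+1}) = μ^{n+1}(r₁,…,r_{n+1}). -/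
open TensorProduct

namespace RackPaper

variable (K : Type*) [CommRing K]
variable (B : Type*) [AddCommGroup B] [Module K B]

section TensorPowers

variable (R : Type*) [AddCommGroup R] [Module K R]

/-- Iterated tensor power as a bundled module: `TpowM n` represents `R^{⊗(n+1)}`
(right-nested). -/
noncomputable def TpowM : ℕ → ModuleCat K
  | 0 => ModuleCat.of K R
  | n + 1 => ModuleCat.of K (R ⊗[K] (TpowM n))

/-- The underlying type of the iterated tensor power `R^{⊗(n+1)}`. -/
noncomputable abbrev Tpow (n : ℕ) : Type _ := (TpowM K R n : Type _)

/-- Transport along an equality of indices. -/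
noncomputable def tcast {m m' : ℕ} (h : m = m') : Tpow K R m →ₗ[K] Tpow K R m' := by
  subst h; exact LinearMap.id

/-- `μⁿ⁺¹ : R^{⊗(n+1)} → R`, the iterated rack product
`r₀ ⊗ ⋯ ⊗ rₙ ↦ r₀ ▹ (r₁ ▹ ( ⋯ ▹ rₙ))`. -/
noncomputable def muL (mul : R ⊗[K] R →ₗ[K] R) : (n : ℕ) → Tpow K R n →ₗ[K] R
  | 0 => LinearMap.id
  | n + 1 => mul ∘ₗ (TensorProduct.map LinearMap.id (muL mul n))

/-- The comultiplication of the tensor-product coalgebra `R^{⊗(n+1)}`. -/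
noncomputable def deltaL (comul : R →ₗ[K] R ⊗[K] R) :
    (n : ℕ) → Tpow K R n →ₗ[K] Tpow K R n ⊗[K] Tpow K R n
  | 0 => comul
  | n + 1 =>
    (tensorTensorTensorComm K R R (Tpow K R n) (Tpow K R n)).toLinearMap ∘ₗ
      TensorProduct.map comul (deltaL comul n)

/-- The counit of the tensor-product coalgebra `R^{⊗(n+1)}`. -/
noncomputable def epsL (counit : R →ₗ[K] K) : (n : ℕ) → Tpow K R n →ₗ[K] K
  | 0 => counit
  | n + 1 => LinearMap.mul' K K ∘ₗ TensorProduct.map counit (epsL counit n)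

/-- The "Sweedler split" map
`r₁ ⊗ ⋯ ⊗ r_{j+s+2} ↦ Σ (r₁⁽¹⁾ ⊗ ⋯ ⊗ r_j⁽¹⁾ ⊗ r_{j+1}) ⊗ (r₁⁽²⁾ ⊗ ⋯ ⊗ r_j⁽²⁾ ⊗ r_{j+2} ⊗ ⋯)`,
comultiplying the first `j` factors jointly and splitting. -/
noncomputable def Dsplit (comul : R →ₗ[K] R ⊗[K] R) :
    (s j : ℕ) → Tpow K R ((s + 1) + j) →ₗ[K] Tpow K R j ⊗[K] Tpow K R (s + j)
  | _, 0 => LinearMap.id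
  | s, j + 1 =>
    (tensorTensorTensorComm K R R (Tpow K R j) (Tpow K R (s + j))).toLinearMap ∘ₗ
      TensorProduct.map comul (Dsplit comul s j)

/-- `a ⊗ (b₀ ⊗ ⋯ ⊗ b_p) ↦ Σ (a⁽¹⁾ ▹ b₀) ⊗ ⋯ ⊗ (a⁽ᵖ⁺¹⁾ ▹ b_p)`. -/
noncomputable def Amap (comul : R →ₗ[K] R ⊗[K] R) (mul : R ⊗[K] R →ₗ[K] R) :
    (p : ℕ) → R ⊗[K] Tpow K R p →ₗ[K] Tpow K R p
  | 0 => mul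
  | p + 1 =>
    TensorProduct.map mul (Amap comul mul p) ∘ₗ
      (tensorTensorTensorComm K R R R (Tpow K R p)).toLinearMap ∘ₗ
      TensorProduct.map comul LinearMap.id

/-- `r₁ ⊗ ⋯ ⊗ r_j ⊗ a ⊗ b₀ ⊗ ⋯ ⊗ b_p ↦ Σ r₁ ⊗ ⋯ ⊗ r_j ⊗ (a⁽¹⁾ ▹ b₀) ⊗ ⋯ ⊗ (a⁽ᵖ⁺¹⁾ ▹ b_p)`:
the first `j` factors are untouched, the next one is comultiplied `p+1` times and acts on the
remaining factors. -/
noncomputable def Gmap (comul : R →ₗ[K] R ⊗[K] R) (mul : R ⊗[K] R →ₗ[K] R) :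
    (p j : ℕ) → Tpow K R ((p + 1) + j) →ₗ[K] Tpow K R (p + j)
  | p, 0 => Amap K R comul mul p
  | p, j + 1 => TensorProduct.map LinearMap.id (Gmap comul mul p j)

end TensorPowers

section AuxNat

variable {K : Type*} [CommRing K] {A B C D A' B' C' D' : Type*}
  [AddCommMonoid A] [Module K A] [AddCommMonoid B] [Module K B]
  [AddCommMonoid C] [Module K C] [AddCommMonoid D] [Module K D]
  [AddCommMonoid A'] [Module K A'] [AddCommMonoid B'] [Module K B']
  [AddCommMonoid C'] [Module K C'] [AddCommMonoid D'] [Module K D']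

lemma mapMapApply (f : B →ₗ[K] C) (g : A →ₗ[K] B) (h : B' →ₗ[K] C') (k : A' →ₗ[K] B')
    (x : A ⊗[K] A') :
    TensorProduct.map f h (TensorProduct.map g k x)
      = TensorProduct.map (f ∘ₗ g) (h ∘ₗ k) x := by
  rw [TensorProduct.map_comp]; rfl

lemma tttNatApply (f : A →ₗ[K] A') (g : B →ₗ[K] B') (h : C →ₗ[K] C') (k : D →ₗ[K] D')
    (x : (A ⊗[K] B) ⊗[K] (C ⊗[K] D)) :
    (tensorTensorTensorComm K A' B' C' D').toLinearMap
        (TensorProduct.map (TensorProduct.map f g) (TensorProduct.map h k) x)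
      = TensorProduct.map (TensorProduct.map f h) (TensorProduct.map g k)
          ((tensorTensorTensorComm K A B C D).toLinearMap x) := by
  have h1 : (tensorTensorTensorComm K A' B' C' D').toLinearMap ∘ₗ
      TensorProduct.map (TensorProduct.map f g) (TensorProduct.map h k)
    = TensorProduct.map (TensorProduct.map f h) (TensorProduct.map g k) ∘ₗ
      (tensorTensorTensorComm K A B C D).toLinearMap := by
    ext a b c d; simp
  exact LinearMap.congr_fun h1 x

end AuxNat

section AuxMain

variable {K : Type*} [CommRing K] {R : Type*} [AddCommGroup R] [Module K R]
variable {comul : R →ₗ[K] R ⊗[K] R} {counit : R →ₗ[K] K} {one : R} {mul : R ⊗[K] R →ₗ[K] R}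

lemma aux_sd (hR : IsRackBialgebra K R comul counit one mul) (y : R ⊗[K] (R ⊗[K] R)) :
    mul (TensorProduct.map mul mul
        ((tensorTensorTensorComm K R R R R).toLinearMap
          (TensorProduct.map comul LinearMap.id y)))
      = mul (TensorProduct.map LinearMap.id mul y) := by
  have := LinearMap.congr_fun hR.self_distrib y
  simp only [LinearMap.comp_apply] at this
  exact this.symm

lemma aux_comul_muL (hR : IsRackBialgebra K R comul counit one mul) :
    ∀ n : ℕ, comul ∘ₗ muL K R mul n
      = TensorProduct.map (muL K R mul n) (muL K R mul n) ∘ₗ deltaL K R comul n := by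
  have hm : ∀ y : R ⊗[K] R, comul (mul y)
      = TensorProduct.map mul mul
          ((tensorTensorTensorComm K R R R R).toLinearMap
            (TensorProduct.map comul comul y)) := by
    intro y
    have := LinearMap.congr_fun hR.comul_mul y
    simp only [comul2, LinearMap.comp_apply] at this
    exact this
  intro n
  induction n with
  | zero =>
      show comul ∘ₗ LinearMap.id
        = TensorProduct.map LinearMap.id LinearMap.id ∘ₗ comul
      rw [TensorProduct.map_id, LinearMap.comp_id, LinearMap.id_comp]
  | succ n IH =>
      show comul ∘ₗ (mul ∘ₗ TensorProduct.map LinearMap.id (muL K R mul n))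
        = TensorProduct.map (mul ∘ₗ TensorProduct.map LinearMap.id (muL K R mul n))
            (mul ∘ₗ TensorProduct.map LinearMap.id (muL K R mul n)) ∘ₗ
          ((tensorTensorTensorComm K R R (Tpow K R n) (Tpow K R n)).toLinearMap ∘ₗ
            TensorProduct.map comul (deltaL K R comul n))
      apply LinearMap.ext; intro x
      simp only [LinearMap.comp_apply]
      rw [hm, mapMapApply comul LinearMap.id comul (muL K R mul n), LinearMap.comp_id, IH]
      rw [show TensorProduct.map comul
            (TensorProduct.map (muL K R mul n) (muL K R mul n) ∘ₗ deltaL K R comul n) x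
          = TensorProduct.map (TensorProduct.map (LinearMap.id (R := K) (M := R)) LinearMap.id)
              (TensorProduct.map (muL K R mul n) (muL K R mul n))
              (TensorProduct.map comul (deltaL K R comul n) x) from by
        rw [mapMapApply, TensorProduct.map_id, LinearMap.id_comp]]
      rw [tttNatApply LinearMap.id LinearMap.id (muL K R mul n) (muL K R mul n)]
      rw [mapMapApply mul (TensorProduct.map LinearMap.id (muL K R mul n)) mul
        (TensorProduct.map LinearMap.id (muL K R mul n))]

lemma aux_counit_muL (hR : IsRackBialgebra K R comul counit one mul) :
    ∀ n : ℕ, counit ∘ₗ muL K R mul n = epsL K R counit n := by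
  have hc : ∀ y : R ⊗[K] R, counit (mul y)
      = LinearMap.mul' K K (TensorProduct.map counit counit y) := by
    intro y
    have := LinearMap.congr_fun hR.counit_mul y
    simp only [counit2, LinearMap.comp_apply] at this
    exact this
  intro n
  induction n with
  | zero => exact LinearMap.comp_id counit
  | succ n IH =>
      show counit ∘ₗ (mul ∘ₗ TensorProduct.map LinearMap.id (muL K R mul n))
        = LinearMap.mul' K K ∘ₗ TensorProduct.map counit (epsL K R counit n)
      apply LinearMap.ext; intro x
      simp only [LinearMap.comp_apply]
      rw [hc, mapMapApply counit LinearMap.id counit (muL K R mul n), LinearMap.comp_id, IH]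

lemma aux_Dsplit (hR : IsRackBialgebra K R comul counit one mul) :
    ∀ s j : ℕ,
      mul ∘ₗ TensorProduct.map (muL K R mul j) (muL K R mul (s + j)) ∘ₗ Dsplit K R comul s j
        = muL K R mul ((s + 1) + j) := by
  intro s j
  induction j with
  | zero =>
      show mul ∘ₗ TensorProduct.map LinearMap.id (muL K R mul s) ∘ₗ LinearMap.id
        = mul ∘ₗ TensorProduct.map LinearMap.id (muL K R mul s)
      rw [LinearMap.comp_id]
  | succ j IH =>
      show mul ∘ₗ TensorProduct.map (mul ∘ₗ TensorProduct.map LinearMap.id (muL K R mul j))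
          (mul ∘ₗ TensorProduct.map LinearMap.id (muL K R mul (s + j))) ∘ₗ
          ((tensorTensorTensorComm K R R (Tpow K R j) (Tpow K R (s + j))).toLinearMap ∘ₗ
            TensorProduct.map comul (Dsplit K R comul s j))
        = mul ∘ₗ TensorProduct.map LinearMap.id (muL K R mul ((s + 1) + j))
      apply LinearMap.ext; intro x
      simp only [LinearMap.comp_apply]
      rw [show TensorProduct.map (mul ∘ₗ TensorProduct.map LinearMap.id (muL K R mul j))
            (mul ∘ₗ TensorProduct.map LinearMap.id (muL K R mul (s + j)))
            ((tensorTensorTensorComm K R R (Tpow K R j) (Tpow K R (s + j))).toLinearMap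
              (TensorProduct.map comul (Dsplit K R comul s j) x))
          = TensorProduct.map mul mul
              (TensorProduct.map (TensorProduct.map LinearMap.id (muL K R mul j))
                (TensorProduct.map LinearMap.id (muL K R mul (s + j)))
                ((tensorTensorTensorComm K R R (Tpow K R j) (Tpow K R (s + j))).toLinearMap
                  (TensorProduct.map comul (Dsplit K R comul s j) x))) from
        (mapMapApply mul (TensorProduct.map LinearMap.id (muL K R mul j)) mul
          (TensorProduct.map LinearMap.id (muL K R mul (s + j))) _).symm]
      rw [← tttNatApply LinearMap.id LinearMap.id (muL K R mul j) (muL K R mul (s + j))]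
      rw [mapMapApply (TensorProduct.map LinearMap.id LinearMap.id) comul
        (TensorProduct.map (muL K R mul j) (muL K R mul (s + j))) (Dsplit K R comul s j),
        TensorProduct.map_id, LinearMap.id_comp]
      rw [show TensorProduct.map comul
            (TensorProduct.map (muL K R mul j) (muL K R mul (s + j)) ∘ₗ Dsplit K R comul s j) x
          = TensorProduct.map comul LinearMap.id
              (TensorProduct.map LinearMap.id
                (TensorProduct.map (muL K R mul j) (muL K R mul (s + j)) ∘ₗ
                  Dsplit K R comul s j) x) from by
        rw [mapMapApply, LinearMap.comp_id, LinearMap.id_comp]]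
      rw [aux_sd hR]
      rw [mapMapApply LinearMap.id LinearMap.id mul
        (TensorProduct.map (muL K R mul j) (muL K R mul (s + j)) ∘ₗ Dsplit K R comul s j),
        LinearMap.id_comp, IH]

lemma aux_Amap (hR : IsRackBialgebra K R comul counit one mul) :
    ∀ p : ℕ, muL K R mul p ∘ₗ Amap K R comul mul p = muL K R mul (p + 1) := by
  intro p
  induction p with
  | zero =>
      show LinearMap.id ∘ₗ mul = mul ∘ₗ TensorProduct.map LinearMap.id LinearMap.id
      rw [TensorProduct.map_id, LinearMap.id_comp, LinearMap.comp_id]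
  | succ p IH =>
      show (mul ∘ₗ TensorProduct.map LinearMap.id (muL K R mul p)) ∘ₗ
          (TensorProduct.map mul (Amap K R comul mul p) ∘ₗ
            ((tensorTensorTensorComm K R R R (Tpow K R p)).toLinearMap ∘ₗ
              TensorProduct.map comul LinearMap.id))
        = mul ∘ₗ TensorProduct.map LinearMap.id (mul ∘ₗ TensorProduct.map LinearMap.id (muL K R mul p))
      apply LinearMap.ext; intro x
      simp only [LinearMap.comp_apply]
      have IH' : muL K R mul p ∘ₗ Amap K R comul mul p
          = (mul ∘ₗ TensorProduct.map LinearMap.id (muL K R mul p) :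
              R ⊗[K] Tpow K R p →ₗ[K] R) := IH
      rw [mapMapApply LinearMap.id mul (muL K R mul p) (Amap K R comul mul p),
        LinearMap.id_comp, IH']
      rw [show TensorProduct.map mul
            ((mul ∘ₗ TensorProduct.map LinearMap.id (muL K R mul p) :
              R ⊗[K] Tpow K R p →ₗ[K] R))
            ((tensorTensorTensorComm K R R R (Tpow K R p)).toLinearMap
              (TensorProduct.map comul LinearMap.id x))
          = TensorProduct.map mul mul
              (TensorProduct.map (TensorProduct.map (LinearMap.id (R := K) (M := R)) LinearMap.id)
                (TensorProduct.map LinearMap.id (muL K R mul p))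
                ((tensorTensorTensorComm K R R R (Tpow K R p)).toLinearMap
                  (TensorProduct.map comul LinearMap.id x))) from by
        rw [mapMapApply, TensorProduct.map_id, LinearMap.comp_id]]
      rw [← tttNatApply LinearMap.id LinearMap.id LinearMap.id (muL K R mul p)]
      rw [mapMapApply (TensorProduct.map LinearMap.id LinearMap.id) comul
        (TensorProduct.map LinearMap.id (muL K R mul p)) LinearMap.id,
        TensorProduct.map_id, LinearMap.id_comp, LinearMap.comp_id]
      rw [show TensorProduct.map comul (TensorProduct.map LinearMap.id (muL K R mul p)) x
          = TensorProduct.map comul LinearMap.id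
              (TensorProduct.map LinearMap.id
                (TensorProduct.map LinearMap.id (muL K R mul p)) x) from by
        rw [mapMapApply, LinearMap.comp_id, LinearMap.id_comp]]
      rw [aux_sd hR]
      rw [mapMapApply LinearMap.id LinearMap.id mul
        (TensorProduct.map LinearMap.id (muL K R mul p)), LinearMap.id_comp]

lemma aux_Gmap (hR : IsRackBialgebra K R comul counit one mul) :
    ∀ p j : ℕ, muL K R mul (p + j) ∘ₗ Gmap K R comul mul p j = muL K R mul ((p + 1) + j) := by
  intro p j
  induction j with
  | zero => exact aux_Amap hR p
  | succ j IH =>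
      show (mul ∘ₗ TensorProduct.map LinearMap.id (muL K R mul (p + j))) ∘ₗ
          TensorProduct.map LinearMap.id (Gmap K R comul mul p j)
        = mul ∘ₗ TensorProduct.map LinearMap.id (muL K R mul ((p + 1) + j))
      apply LinearMap.ext; intro x
      simp only [LinearMap.comp_apply]
      rw [mapMapApply LinearMap.id LinearMap.id (muL K R mul (p + j)) (Gmap K R comul mul p j),
        LinearMap.id_comp, IH]

end AuxMain


/-- Let `(R, Δ, ε, 1, ▹)` be a cocommutative rack bialgebra over `K` and
let `μⁿ : R^{⊗n} → R` be the iterated products `μⁿ(r₁,…,rₙ) = r₁ ▹ (r₂ ▹ (⋯ ▹ rₙ))`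
(here `muL (n-1)` is `μⁿ`).  Then every `μⁿ` (`n ≥ 1`) is a morphism of coalgebras, and for
all `1 ≤ i < n` one has
`Σ μ^i(r₁⁽¹⁾,…,r_{i−1}⁽¹⁾,r_i) ▹ μ^{n−1}(r₁⁽²⁾,…,r_{i−1}⁽²⁾,r_{i+1},…,rₙ) = μⁿ(r₁,…,rₙ)`
(expressed by `Dsplit` with `i = j+1`, `n = s+j+2`) and
`Σ μⁿ(r₁,…,r_{i−1}, r_i⁽¹⁾ ▹ r_{i+1}, …, r_i⁽ⁿ⁺¹⁻ⁱ⁾ ▹ r_{n+1}) = μ^{n+1}(r₁,…,r_{n+1})`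
(expressed by `Gmap` with `i = j+1`, `n = p+j+1`, the constraint `i < n` being `1 ≤ p`). -/
theorem muL_coalgebra_morphism_and_identities
    (K : Type*) [CommRing K] [Algebra ℚ K]
    (R : Type*) [AddCommGroup R] [Module K R]
    (comul : R →ₗ[K] R ⊗[K] R) (counit : R →ₗ[K] K) (one : R) (mul : R ⊗[K] R →ₗ[K] R)
    (hR : IsRackBialgebra K R comul counit one mul)
    (cocomm : ∀ x : R, (TensorProduct.comm K R R) (comul x) = comul x) :
    (∀ n : ℕ, comul ∘ₗ muL K R mul n
        = TensorProduct.map (muL K R mul n) (muL K R mul n) ∘ₗ deltaL K R comul n) ∧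
    (∀ n : ℕ, counit ∘ₗ muL K R mul n = epsL K R counit n) ∧
    (∀ s j : ℕ,
      mul ∘ₗ TensorProduct.map (muL K R mul j) (muL K R mul (s + j)) ∘ₗ Dsplit K R comul s j
        = muL K R mul ((s + 1) + j)) ∧
    (∀ p j : ℕ, 1 ≤ p →
      muL K R mul (p + j) ∘ₗ Gmap K R comul mul p j = muL K R mul ((p + 1) + j)) := by
  exact ⟨aux_comul_muL hR, aux_counit_muL hR, aux_Dsplit hR, fun p j _ => aux_Gmap hR p j⟩

end RackPaper
end

section
/- Let 𝔥 be a finite-dimensional real Leibniz algebra. For every x ∈ 𝔥 the operator exponential exp(ad_x) is an automorphism of the Leibniz bracket, i.e. [exp(ad_x)(y), exp(ad_x)(z)] = exp(ad_x)([y,z]) for all y,z ∈ 𝔥. Consequently the binary operation x ▶ y := exp(ad_x)(y) satisfies, for all x,y,z ∈ 𝔥: x ▶ (y ▶ z) = (x ▶ y) ▶ (x ▶ z), 0 ▶ y = y, x ▶ 0 = 0, and each map y ↦ x ▶ y is a linear bijection of 𝔥; hence (𝔥, 0, ▶) is a pointed rack. -/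
/-!
By the Leibniz identity `ad x` is a derivation of the bracket, so both
`s ↦ [exp (s • ad x) y, exp (s • ad x) z]` and `s ↦ exp (s • ad x) [y, z]` solve `f' = ad x f`
with the same initial value: hence `exp (ad x)` is a bracket automorphism. An automorphism `φ` conjugates `ad y` into `ad (φ y)`,
hence `exp (ad y)` into `exp (ad (φ y))`; for `φ = exp (ad x)` this is self-distributivity.
-/

namespace RackPaper

open NormedSpace

section Exponential

variable {V : Type*} [NormedAddCommGroup V] [NormedSpace ℝ V] [CompleteSpace V]

theorem hasDerivAt_exp_smul_apply (D : V →L[ℝ] V) (w : V) (s : ℝ) :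
    HasDerivAt (fun u : ℝ => exp (u • D) w) (D (exp (s • D) w)) s := by
  simpa using (hasDerivAt_exp_smul_const' D s).clm_apply (hasDerivAt_const s w)

theorem exp_apply_bilinear_of_derivation (B : V →L[ℝ] V →L[ℝ] V) (D : V →L[ℝ] V)
    (hD : ∀ y z, D (B y z) = B (D y) z + B y (D z)) (y z : V) :
    B (exp D y) (exp D z) = exp D (B y z) := by
  set F : ℝ → V := fun s => B (exp (s • D) y) (exp (s • D) z)
  set G : ℝ → V := fun s => exp (s • D) (B y z)
  have hF : ∀ s, HasDerivAt F (D (F s)) s := fun s => by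
    have hy := B.hasFDerivAt.comp_hasDerivAt s (hasDerivAt_exp_smul_apply D y s)
    simpa only [F, hD, Function.comp_def] using hy.clm_apply (hasDerivAt_exp_smul_apply D z s)
  have hG : ∀ s, HasDerivAt G (D (G s)) s := hasDerivAt_exp_smul_apply D (B y z)
  have hFG : Set.EqOn F G (Set.Icc 0 1) :=
    ODE_solution_unique (v := fun _ => D) (fun _ => D.lipschitz)
      (fun s _ => (hF s).continuousAt.continuousWithinAt) (fun s _ => (hF s).hasDerivWithinAt)
      (fun s _ => (hG s).continuousAt.continuousWithinAt) (fun s _ => (hG s).hasDerivWithinAt)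
      (by simp [F, G])
  simpa [F, G] using hFG (Set.right_mem_Icc.mpr zero_le_one)

theorem exp_apply_map_of_map_bilinear (B : V →L[ℝ] V →L[ℝ] V) (U : V →L[ℝ] V)
    (hU : ∀ y z, B (U y) (U z) = U (B y z)) (y z : V) :
    exp (B (U y)) (U z) = U (exp (B y) z) := by
  let +nondep : NormedAlgebra ℚ (V →L[ℝ] V) := .restrictScalars ℚ ℝ _
  have hconj : SemiconjBy U (B y) (B (U y)) := ContinuousLinearMap.ext fun w => (hU y w).symm
  exact (ContinuousLinearMap.ext_iff.mp hconj.exp_right z).symm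

theorem bijective_exp (D : V →L[ℝ] V) : Function.Bijective ⇑(exp D) := by
  let +nondep : NormedAlgebra ℚ (V →L[ℝ] V) := .restrictScalars ℚ ℝ _
  exact ContinuousLinearMap.isUnit_iff_bijective.mp (isUnit_exp D)

end Exponential

/-- Let `𝔥` be a finite-dimensional real Leibniz algebra.  For every
`x ∈ 𝔥` the operator exponential `exp(ad_x)` is an automorphism of the Leibniz bracket,
i.e. `[exp(ad_x)(y), exp(ad_x)(z)] = exp(ad_x)([y,z])`.  Consequently the binary operation
`x ▶ y := exp(ad_x)(y)` satisfies self-distributivity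
`x ▶ (y ▶ z) = (x ▶ y) ▶ (x ▶ z)`, `0 ▶ y = y`, `x ▶ 0 = 0`, and each left translation
`y ↦ x ▶ y` is a (linear) bijection of `𝔥`; hence `(𝔥, 0, ▶)` is a pointed rack. -/
theorem leibniz_exponential_rack
    (V : Type*) [NormedAddCommGroup V] [NormedSpace ℝ V] [FiniteDimensional ℝ V]
    (br : V →ₗ[ℝ] V →ₗ[ℝ] V)
    (leibniz : ∀ x y z : V, br x (br y z) = br (br x y) z + br y (br x z))
    (t : V → V → V)
    (ht : ∀ x y : V,
      t x y = NormedSpace.exp (LinearMap.toContinuousLinearMap (br x)) y) :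
    (∀ x y z : V, br (t x y) (t x z) = t x (br y z)) ∧
    (∀ x y z : V, t x (t y z) = t (t x y) (t x z)) ∧
    (∀ y : V, t 0 y = y) ∧
    (∀ x : V, t x 0 = 0) ∧
    (∀ x : V, Function.Bijective (t x)) := by
  let B : V →L[ℝ] V →L[ℝ] V :=
    LinearMap.toContinuousLinearMap (LinearMap.toContinuousLinearMap.toLinearMap ∘ₗ br)
  obtain rfl : t = fun x => ⇑(exp (B x)) := funext₂ ht
  have aut : ∀ x y z : V, B (exp (B x) y) (exp (B x) z) = exp (B x) (B y z) := fun x =>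
    exp_apply_bilinear_of_derivation B (B x) (leibniz x)
  exact ⟨aut, fun x y z => (exp_apply_map_of_map_bilinear B _ (aut x) y z).symm,
    fun y => by simp, fun x => map_zero _, fun x => bijective_exp (B x)⟩
end RackPaper
end
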